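/- arXiv:2312.12052 — 2 statements merged into one kernel-verified Lean document; each statement's English description precedes it below -/
import Mathlib

section
/- Assume MA[𝔡]. Let X be a Hausdorff space with countable network weight and weight strictly less than 𝔡. Then the following are equivalent: (1) |X| < 𝔡; (2) Alice does not have a winning strategy in the M-nw-selective game on X; (3) X is M-nw-selective. -/
open Set Cardinal TopologicalSpace

/-- A family of subsets is a *network*: every point and open neighbourhood admit a
member of the family squeezed between them. -/
def IsNetwork {X : Type*} [TopologicalSpace X] (𝒩 : Set (Set X)) : Prop :=
  ∀ (x : X) (U : Set X), IsOpen U → x ∈ U → ∃ N ∈ 𝒩, x ∈ N ∧ N ⊆ U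

/-- The collection of countable networks of a space. -/
def CtblNetwork (X : Type*) [TopologicalSpace X] : Set (Set (Set X)) :=
  {𝒩 | 𝒩.Countable ∧ IsNetwork 𝒩}

/-- The weight of a topological space: the least cardinality of a basis. -/
noncomputable def topWeight (X : Type*) [TopologicalSpace X] : Cardinal :=
  sInf { c | ∃ B : Set (Set X), TopologicalSpace.IsTopologicalBasis B ∧ Cardinal.mk B = c }

/-! ### The R-nw-selective game -/

/-- A strategy for Bob in the R-nw-selective game: given Alice's moves so far
(the networks played in innings `0,…,n`), Bob picks a set. -/
def RBobStrategy (X : Type*) [TopologicalSpace X] : Type _ :=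
  ∀ n : ℕ, (Fin (n + 1) → Set (Set X)) → Set X

/-- Bob's strategy `σ` is winning in the R-nw-selective game: against any run where Alice
plays countable networks, Bob's answers are legal and form a network. -/
def RBobWinning {X : Type*} [TopologicalSpace X] (σ : RBobStrategy X) : Prop :=
  ∀ A : ℕ → Set (Set X), (∀ n, A n ∈ CtblNetwork X) →
    (∀ n, σ n (fun i => A i.1) ∈ A n) ∧
    IsNetwork (Set.range fun n => σ n (fun i : Fin (n + 1) => A i.1))

/-- Bob has a winning strategy in the R-nw-selective game. -/
def RBobWins (X : Type*) [TopologicalSpace X] : Prop :=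
  ∃ σ : RBobStrategy X, RBobWinning σ

/-- A strategy for Alice in the R-nw-selective game: given Bob's previous picks,
Alice plays a (countable) network. -/
def RAliceStrategy (X : Type*) [TopologicalSpace X] : Type _ :=
  ∀ n : ℕ, (Fin n → Set X) → Set (Set X)

/-- Alice's strategy `α` is winning in the R-nw-selective game: it always plays countable
networks, and no legal sequence of Bob's answers forms a network. -/
def RAliceWinning {X : Type*} [TopologicalSpace X] (α : RAliceStrategy X) : Prop :=
  (∀ n h, α n h ∈ CtblNetwork X) ∧
  ∀ b : ℕ → Set X, (∀ n, b n ∈ α n (fun i : Fin n => b i.1)) → ¬ IsNetwork (Set.range b)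

/-- Alice has a winning strategy in the R-nw-selective game. -/
def RAliceWins (X : Type*) [TopologicalSpace X] : Prop :=
  ∃ α : RAliceStrategy X, RAliceWinning α

/-- The R-nw-selective selection principle. -/
def RNwSelective (X : Type*) [TopologicalSpace X] : Prop :=
  ∀ A : ℕ → Set (Set X), (∀ n, A n ∈ CtblNetwork X) →
    ∃ b : ℕ → Set X, (∀ n, b n ∈ A n) ∧ IsNetwork (Set.range b)

/-! ### The M-nw-selective game -/

/-- A strategy for Bob in the M-nw-selective game: given Alice's networks so far,
Bob picks a finite collection of sets. -/
def MBobStrategy (X : Type*) [TopologicalSpace X] : Type _ :=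
  ∀ n : ℕ, (Fin (n + 1) → Set (Set X)) → Finset (Set X)

/-- Bob's strategy is winning in the M-nw-selective game. -/
def MBobWinning {X : Type*} [TopologicalSpace X] (σ : MBobStrategy X) : Prop :=
  ∀ A : ℕ → Set (Set X), (∀ n, A n ∈ CtblNetwork X) →
    (∀ n, ↑(σ n (fun i => A i.1)) ⊆ A n) ∧
    IsNetwork (⋃ n, (↑(σ n (fun i : Fin (n + 1) => A i.1)) : Set (Set X)))

/-- Bob has a winning strategy in the M-nw-selective game. -/
def MBobWins (X : Type*) [TopologicalSpace X] : Prop :=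
  ∃ σ : MBobStrategy X, MBobWinning σ

/-- A strategy for Alice in the M-nw-selective game. -/
def MAliceStrategy (X : Type*) [TopologicalSpace X] : Type _ :=
  ∀ n : ℕ, (Fin n → Finset (Set X)) → Set (Set X)

/-- Alice's strategy is winning in the M-nw-selective game. -/
def MAliceWinning {X : Type*} [TopologicalSpace X] (α : MAliceStrategy X) : Prop :=
  (∀ n h, α n h ∈ CtblNetwork X) ∧
  ∀ b : ℕ → Finset (Set X), (∀ n, ↑(b n) ⊆ α n (fun i : Fin n => b i.1)) →
    ¬ IsNetwork (⋃ n, (↑(b n) : Set (Set X)))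

/-- Alice has a winning strategy in the M-nw-selective game. -/
def MAliceWins (X : Type*) [TopologicalSpace X] : Prop :=
  ∃ α : MAliceStrategy X, MAliceWinning α

/-- The M-nw-selective selection principle. -/
def MNwSelective (X : Type*) [TopologicalSpace X] : Prop :=
  ∀ A : ℕ → Set (Set X), (∀ n, A n ∈ CtblNetwork X) →
    ∃ F : ℕ → Finset (Set X), (∀ n, ↑(F n) ⊆ A n) ∧
      IsNetwork (⋃ n, (↑(F n) : Set (Set X)))

/-! ### The (Point, Open)-Set game -/

/-- A strategy for Alice in the (Point, Open)-Set game: given Bob's previous picks,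
Alice plays a point together with an open neighbourhood of it. -/
def POAliceStrategy (X : Type*) [TopologicalSpace X] : Type _ :=
  ∀ n : ℕ, (Fin n → Set X) → X × Set X

/-- Alice's strategy is winning in the (Point, Open)-Set game: her moves are legal
(a point inside an open set), and every legal sequence of Bob's answers is a network. -/
def POAliceWinning {X : Type*} [TopologicalSpace X] (α : POAliceStrategy X) : Prop :=
  (∀ n h, (α n h).1 ∈ (α n h).2 ∧ IsOpen (α n h).2) ∧
  ∀ b : ℕ → Set X,
    (∀ n, (α n (fun i : Fin n => b i.1)).1 ∈ b n ∧ b n ⊆ (α n (fun i : Fin n => b i.1)).2) →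
    IsNetwork (Set.range b)

/-- Alice has a winning strategy in the (Point, Open)-Set game. -/
def POAliceWins (X : Type*) [TopologicalSpace X] : Prop :=
  ∃ α : POAliceStrategy X, POAliceWinning α

/-- A strategy for Bob in the (Point, Open)-Set game. -/
def POBobStrategy (X : Type*) [TopologicalSpace X] : Type _ :=
  ∀ n : ℕ, (Fin (n + 1) → X × Set X) → Set X

/-- Bob's strategy is winning in the (Point, Open)-Set game: his answers are legal and
never form a network, whenever Alice plays legally. -/
def POBobWinning {X : Type*} [TopologicalSpace X] (σ : POBobStrategy X) : Prop :=
  ∀ A : ℕ → X × Set X, (∀ n, (A n).1 ∈ (A n).2 ∧ IsOpen (A n).2) →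
    (∀ n, (A n).1 ∈ σ n (fun i => A i.1) ∧ σ n (fun i => A i.1) ⊆ (A n).2) ∧
    ¬ IsNetwork (Set.range fun n => σ n (fun i : Fin (n + 1) => A i.1))

/-- Bob has a winning strategy in the (Point, Open)-Set game. -/
def POBobWins (X : Type*) [TopologicalSpace X] : Prop :=
  ∃ σ : POBobStrategy X, POBobWinning σ

/-! ### The game `G_k(Nw, Nw)` -/

/-- Bob's strategy (same shape as in the M-game) is winning in `G_k(Nw,Nw)`:
he always selects exactly `k` elements of Alice's network, and his selections
accumulate to a network. -/
def GkBobWinning {X : Type*} [TopologicalSpace X] (k : ℕ) (σ : MBobStrategy X) : Prop :=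
  ∀ A : ℕ → Set (Set X), (∀ n, A n ∈ CtblNetwork X) →
    (∀ n, ↑(σ n (fun i => A i.1)) ⊆ A n ∧ (σ n (fun i : Fin (n + 1) => A i.1)).card = k) ∧
    IsNetwork (⋃ n, (↑(σ n (fun i : Fin (n + 1) => A i.1)) : Set (Set X)))

/-- Bob has a winning strategy in `G_k(Nw,Nw)`. -/
def GkBobWins (X : Type*) [TopologicalSpace X] (k : ℕ) : Prop :=
  ∃ σ : MBobStrategy X, GkBobWinning k σ

/-- Alice's strategy is winning in `G_k(Nw,Nw)`. -/
def GkAliceWinning {X : Type*} [TopologicalSpace X] (k : ℕ) (α : MAliceStrategy X) : Prop :=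
  (∀ n h, α n h ∈ CtblNetwork X) ∧
  ∀ b : ℕ → Finset (Set X),
    (∀ n, ↑(b n) ⊆ α n (fun i : Fin n => b i.1) ∧ (b n).card = k) →
    ¬ IsNetwork (⋃ n, (↑(b n) : Set (Set X)))

/-- Alice has a winning strategy in `G_k(Nw,Nw)`. -/
def GkAliceWins (X : Type*) [TopologicalSpace X] (k : ℕ) : Prop :=
  ∃ α : MAliceStrategy X, GkAliceWinning k α

/-! ### Cardinal characteristics and Martin's Axiom -/

/-- `cov(M)`: the least cardinality of a family of meager subsets of `ℝ` covering `ℝ`. -/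
noncomputable def covMeager : Cardinal :=
  sInf { c | ∃ S : Set (Set ℝ), (∀ A ∈ S, IsMeagre A) ∧ ⋃₀ S = Set.univ ∧ Cardinal.mk S = c }

/-- `𝔡`: the dominating number, the least cardinality of a dominating family in `ω^ω`. -/
noncomputable def domNumber : Cardinal :=
  sInf { c | ∃ D : Set (ℕ → ℕ), (∀ g : ℕ → ℕ, ∃ f ∈ D, ∀ᶠ n in Filter.atTop, g n ≤ f n) ∧
    Cardinal.mk D = c }

/-- A subset of a poset is dense (downwards). -/
def PosetDense {P : Type*} [Preorder P] (D : Set P) : Prop :=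
  ∀ p : P, ∃ q ∈ D, q ≤ p

/-- A filter on a poset: nonempty, upwards closed and downwards directed. -/
def PosetFilter {P : Type*} [Preorder P] (F : Set P) : Prop :=
  F.Nonempty ∧ (∀ p ∈ F, ∀ q, p ≤ q → q ∈ F) ∧
    ∀ p ∈ F, ∀ q ∈ F, ∃ r ∈ F, r ≤ p ∧ r ≤ q

/-- The countable chain condition for a poset: every antichain is countable. -/
def PosetCCC (P : Type*) [Preorder P] : Prop :=
  ∀ A : Set P, (∀ p ∈ A, ∀ q ∈ A, p ≠ q → ¬ ∃ r, r ≤ p ∧ r ≤ q) → A.Countable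

/-- Martin's Axiom below the cardinal `c`: for every nonempty ccc poset and every family of
fewer than `c` dense sets, there is a filter meeting all of them. -/
def MartinsAxiomBelow (c : Cardinal) : Prop :=
  ∀ (P : Type) [Preorder P], Nonempty P → PosetCCC P →
    ∀ 𝒟 : Set (Set P), (∀ D ∈ 𝒟, PosetDense D) → Cardinal.mk 𝒟 < c →
      ∃ F : Set P, PosetFilter F ∧ ∀ D ∈ 𝒟, (F ∩ D).Nonempty

universe u

/-! (3) ⇒ (1): for `φ : X → ℕ → ℕ`, removing from the members of a countable network the points
`x` with `k < φ x n`, for all `k`, leaves a countable network; a finite selection uses finitely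
many `k`, so a selection gives one `g` with `φ x n ≤ g n` for every `x` and some `n`. When `φ`
enumerates the shifts of a dominating family this is impossible, hence `|X| < 𝔡`.

(1) ⇒ (2): the legal finite plays against a strategy of Alice form a countable poset, ordered by
extension. MA(𝔡) gives a filter meeting the dense sets "the play has length `> n`" and "the play
covers the point `x` inside the basic open set `V`", fewer than `𝔡` of them; the filter is a run of
the game in which Bob's picks form a network.

(2) ⇒ (3): a sequence of networks witnessing the failure of selection is a winning strategy for
Alice that ignores Bob's moves. -/

theorem Set.Countable.setOf_finset_subset {β : Type*} {C : Set β} (hC : C.Countable) :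
    {b : Finset β | ↑b ⊆ C}.Countable := by
  refine ((countable_ofPred_finite_subset hC).preimage Finset.coe_injective).mono ?_
  intro b hb
  exact ⟨b.finite_toSet, hb⟩

theorem exists_isTopologicalBasis_mk_eq_topWeight (X : Type*) [TopologicalSpace X] :
    ∃ B : Set (Set X), IsTopologicalBasis B ∧ #B = topWeight X :=
  csInf_mem (s := {c | ∃ B : Set (Set X), IsTopologicalBasis B ∧ #B = c})
    ⟨_, _, isTopologicalBasis_opens, rfl⟩

theorem exists_dominating_mk_eq_domNumber : ∃ D : Set (ℕ → ℕ),
    (∀ g : ℕ → ℕ, ∃ f ∈ D, ∀ᶠ n in Filter.atTop, g n ≤ f n) ∧ #D = domNumber :=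
  csInf_mem (s := {c | ∃ D : Set (ℕ → ℕ),
      (∀ g : ℕ → ℕ, ∃ f ∈ D, ∀ᶠ n in Filter.atTop, g n ≤ f n) ∧ #D = c})
    ⟨_, Set.univ, fun g => ⟨g, trivial, Filter.Eventually.of_forall fun _ => le_rfl⟩, rfl⟩

theorem exists_not_eventually_le_of_countable {D : Set (ℕ → ℕ)} (hD : D.Countable) :
    ∃ g : ℕ → ℕ, ∀ f ∈ D, ¬ ∀ᶠ n in Filter.atTop, g n ≤ f n := by
  rcases D.eq_empty_or_nonempty with rfl | hne
  · exact ⟨0, fun f hf => hf.elim⟩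
  obtain ⟨d, rfl⟩ := hD.exists_eq_range hne
  refine ⟨fun n => ∑ i ∈ Finset.range (n + 1), d i n + 1, ?_⟩
  rintro _ ⟨i, rfl⟩ h
  obtain ⟨n, hin, hn⟩ := ((Filter.eventually_ge_atTop i).and h).exists
  dsimp only at hn
  have : d i n ≤ ∑ j ∈ Finset.range (n + 1), d j n :=
    Finset.single_le_sum (f := fun j => d j n) (fun _ _ => Nat.zero_le _)
      (Finset.mem_range.2 (by omega))
  omega

theorem aleph0_lt_domNumber : ℵ₀ < domNumber := by
  obtain ⟨D, hD, hDmk⟩ := exists_dominating_mk_eq_domNumber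
  by_contra! h
  obtain ⟨g, hg⟩ :=
    exists_not_eventually_le_of_countable (le_aleph0_iff_set_countable.1 (hDmk ▸ h))
  obtain ⟨f, hf, hgf⟩ := hD g
  exact hg f hf hgf

theorem mk_lt_lift_domNumber_of_forall_exists_le {S : Type u}
    (h : ∀ φ : S → ℕ → ℕ, ∃ g : ℕ → ℕ, ∀ s, ∃ n, φ s n ≤ g n) :
    #S < lift.{u} domNumber := by
  by_contra! hS
  obtain ⟨D, hD, hDmk⟩ := exists_dominating_mk_eq_domNumber
  have hmk : lift.{u} #(D × ℕ) ≤ lift.{0} #S := by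
    rw [mk_prod, lift_id, lift_id, mk_nat, hDmk,
      mul_eq_left aleph0_lt_domNumber.le aleph0_lt_domNumber.le aleph0_ne_zero, lift_uzero]
    exact hS
  obtain ⟨ι⟩ := lift_mk_le'.1 hmk
  -- `ι (f, m)` stands for the shift of `f` by `m`.
  obtain ⟨g, hg⟩ := h (Function.extend ι (fun p n => p.1.1 (n + p.2)) 0)
  obtain ⟨f, hf, hgf⟩ := hD fun n => ∑ i ∈ Finset.range (n + 1), g i + 1
  obtain ⟨m, hm⟩ := Filter.eventually_atTop.1 hgf
  obtain ⟨n, hn⟩ := hg (ι (⟨f, hf⟩, m))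
  rw [ι.injective.extend_apply] at hn
  dsimp only at hn
  have : g n ≤ ∑ i ∈ Finset.range (n + m + 1), g i :=
    Finset.single_le_sum (f := g) (fun _ _ => Nat.zero_le _) (Finset.mem_range.2 (by omega))
  have := hm (n + m) (by omega)
  omega

theorem MNwSelective.exists_forall_exists_le {X : Type*} [TopologicalSpace X]
    (hX : MNwSelective X) (hnw : (CtblNetwork X).Nonempty) (φ : X → ℕ → ℕ) :
    ∃ g : ℕ → ℕ, ∀ x, ∃ n, φ x n ≤ g n := by
  obtain ⟨𝒩, h𝒩c, h𝒩⟩ := hnw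
  let A : ℕ → Set (Set X) := fun n =>
    (fun p : Set X × ℕ => p.1 \ {x | p.2 < φ x n}) '' (𝒩 ×ˢ Set.univ)
  have hA : ∀ n, A n ∈ CtblNetwork X := by
    refine fun n => ⟨(h𝒩c.prod countable_univ).image _, fun x U hU hxU => ?_⟩
    obtain ⟨S, hS, hxS, hSU⟩ := h𝒩 x U hU hxU
    exact ⟨_, ⟨(S, φ x n), ⟨hS, trivial⟩, rfl⟩, ⟨hxS, lt_irrefl (φ x n)⟩,
      sdiff_subset.trans hSU⟩
  have hAbdd : ∀ n, ∀ E ∈ A n, BddAbove ((φ · n) '' E) := by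
    rintro n _ ⟨⟨S, k⟩, -, rfl⟩
    exact ⟨k, by rintro _ ⟨x, ⟨-, hx⟩, rfl⟩; exact not_lt.1 hx⟩
  obtain ⟨F, hFA, hF⟩ := hX A hA
  have hFbdd : ∀ n, BddAbove (⋃ E ∈ F n, (φ · n) '' E) := fun n =>
    (F n).finite_toSet.bddAbove_biUnion.2 fun E hE => hAbdd n E (hFA n hE)
  choose g hg using hFbdd
  refine ⟨g, fun x => ?_⟩
  obtain ⟨E, hE, hxE, -⟩ := hF x univ isOpen_univ trivial
  obtain ⟨n, hEn⟩ := mem_iUnion.1 hE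
  exact ⟨n, hg n (mem_biUnion hEn (mem_image_of_mem _ hxE))⟩

theorem mNwSelective_of_not_mAliceWins {X : Type*} [TopologicalSpace X]
    (h : ¬ MAliceWins X) : MNwSelective X := by
  intro A hA
  by_contra! hsel
  exact h ⟨fun n _ => A n, fun n _ => hA n, hsel⟩

theorem MartinsAxiomBelow.exists_posetFilter_of_countable {c : Cardinal.{0}}
    (hMA : MartinsAxiomBelow c) {P : Type u} [Preorder P] [Countable P] [Nonempty P]
    {ι : Type u} (D : ι → Set P) (hD : ∀ i, PosetDense (D i)) (hι : #ι < lift.{u} c) :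
    ∃ F : Set P, PosetFilter F ∧ ∀ i, (F ∩ D i).Nonempty := by
  -- MA only speaks about posets in `Type`, so move `P` there.
  let e := equivShrink.{0} P
  let _ : Preorder (Shrink.{0} P) := Preorder.lift e.symm
  have he : ∀ p q, e.symm p ≤ e.symm q ↔ p ≤ q := fun _ _ => Iff.rfl
  have : Countable (Shrink.{0} P) := Countable.of_equiv P e
  have hdense : ∀ E ∈ range fun i => e.symm ⁻¹' D i, PosetDense E := by
    rintro _ ⟨i, rfl⟩ q
    obtain ⟨p, hp, hpq⟩ := hD i (e.symm q)
    exact ⟨e p, by simpa using hp, (he _ _).1 (by simpa using hpq)⟩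
  have hcard : #(range fun i => e.symm ⁻¹' D i) < c := by
    have := mk_range_le_lift (f := fun i => e.symm ⁻¹' D i)
    rw [lift_uzero] at this
    exact lift_lt.1 (this.trans_lt hι)
  obtain ⟨G, ⟨⟨q₀, hq₀⟩, hup, hdir⟩, hGD⟩ :=
    hMA (Shrink.{0} P) (Nonempty.map e ‹_›) (fun A _ => A.to_countable) _ hdense hcard
  refine ⟨e.symm '' G, ⟨⟨e.symm q₀, mem_image_of_mem _ hq₀⟩, ?_, ?_⟩, fun i => ?_⟩
  · rintro _ ⟨q, hq, rfl⟩ p hqp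
    exact ⟨e p, hup q hq _ ((he _ _).1 (by simpa using hqp)), by simp⟩
  · rintro _ ⟨q, hq, rfl⟩ _ ⟨q', hq', rfl⟩
    obtain ⟨r, hr, hrq, hrq'⟩ := hdir q hq q' hq'
    exact ⟨e.symm r, mem_image_of_mem _ hr, hrq, hrq'⟩
  · obtain ⟨q, hqG, hqD⟩ := hGD _ ⟨i, rfl⟩
    exact ⟨e.symm q, mem_image_of_mem _ hqG, hqD⟩

namespace MAliceStrategy

variable {X : Type*} [TopologicalSpace X] (α : MAliceStrategy X)

/-- Bob's legal first `n` moves against `α`, as sequences that are `∅` from index `n` on. -/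
def plays : ℕ → Set (ℕ → Finset (Set X))
  | 0 => {fun _ => ∅}
  | n + 1 => ⋃ s ∈ plays n, Function.update s n '' {b | ↑b ⊆ α n fun j => s j}

variable {α}

theorem update_mem_plays_succ {n : ℕ} {s : ℕ → Finset (Set X)} {b : Finset (Set X)}
    (hs : s ∈ α.plays n) (hb : ↑b ⊆ α n fun j => s j) :
    Function.update s n b ∈ α.plays (n + 1) :=
  mem_biUnion hs (mem_image_of_mem _ hb)

theorem subset_of_mem_plays {n : ℕ} {s : ℕ → Finset (Set X)} (hs : s ∈ α.plays n) {i : ℕ}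
    (hi : i < n) : ↑(s i) ⊆ α i fun j => s j := by
  induction n generalizing s with
  | zero => omega
  | succ n ih =>
    obtain ⟨t, ht, b, hb, rfl⟩ : ∃ t ∈ α.plays n, ∃ b, ↑b ⊆ (α n fun j : Fin n => t j) ∧
        Function.update t n b = s := by
      simpa [plays] using hs
    have hprev : (fun j : Fin i => Function.update t n b j) = fun j : Fin i => t j :=
      funext fun j => Function.update_of_ne (by omega) _ _
    rw [hprev]
    rcases Nat.lt_succ_iff_lt_or_eq.1 hi with hi | rfl
    · rw [Function.update_of_ne hi.ne]
      exact ih ht hi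
    · rw [Function.update_self]
      exact hb

theorem countable_plays (hα : ∀ n h, (α n h).Countable) (n : ℕ) : (α.plays n).Countable := by
  induction n with
  | zero => exact countable_singleton _
  | succ n ih => exact ih.biUnion fun s _ => (hα n _).setOf_finset_subset.image _

variable (α) in
structure PartialPlay where
  length : ℕ
  moves : ℕ → Finset (Set X)
  mem_plays : moves ∈ α.plays length

instance : Preorder α.PartialPlay where
  le p q := q.length ≤ p.length ∧ ∀ i < q.length, p.moves i = q.moves i
  le_refl _ := ⟨le_rfl, fun _ _ => rfl⟩
  le_trans _ _ _ hpq hqr :=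
    ⟨hqr.1.trans hpq.1, fun i hi => (hpq.2 i (hi.trans_le hqr.1)).trans (hqr.2 i hi)⟩

instance : Nonempty α.PartialPlay := ⟨⟨0, fun _ => ∅, rfl⟩⟩

theorem countable_partialPlay (hα : ∀ n h, (α n h).Countable) : Countable α.PartialPlay := by
  have := fun n => (countable_plays hα n).to_subtype
  refine Function.Injective.countable (f := fun p => (⟨p.length, p.moves, p.mem_plays⟩ :
    Σ n, α.plays n)) ?_
  rintro ⟨⟩ ⟨⟩ h
  simp only [Sigma.mk.injEq] at h
  obtain ⟨rfl, h⟩ := h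
  simpa using h

namespace PartialPlay

theorem exists_le_moves_length_eq (p : α.PartialPlay) {b : Finset (Set X)}
    (hb : ↑b ⊆ α p.length fun j => p.moves j) :
    ∃ q ≤ p, q.length = p.length + 1 ∧ q.moves p.length = b :=
  ⟨⟨_, _, update_mem_plays_succ p.mem_plays hb⟩,
    ⟨Nat.le_succ _, fun _ hi => Function.update_of_ne hi.ne _ _⟩, rfl, Function.update_self ..⟩

theorem posetDense_lt_length (n : ℕ) : PosetDense {p : α.PartialPlay | n < p.length} := by
  intro p
  induction n with
  | zero =>
    obtain ⟨q, hqp, hq, -⟩ := p.exists_le_moves_length_eq (b := ∅) (by simp)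
    exact ⟨q, by simp [hq], hqp⟩
  | succ n ih =>
    obtain ⟨q, hq, hqp⟩ := ih
    obtain ⟨r, hrq, hr, -⟩ := q.exists_le_moves_length_eq (b := ∅) (by simp)
    exact ⟨r, show n + 1 < r.length by rw [hr]; exact Nat.succ_lt_succ hq, hrq.trans hqp⟩

theorem posetDense_covers (hα : ∀ n h, IsNetwork (α n h)) (x : X) {U : Set X}
    (hU : IsOpen U) :
    PosetDense {p : α.PartialPlay | x ∈ U → ∃ i < p.length, ∃ N ∈ p.moves i, x ∈ N ∧ N ⊆ U} := by
  intro p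
  by_cases hx : x ∈ U
  · obtain ⟨N, hN, hxN, hNU⟩ := hα _ _ x U hU hx
    obtain ⟨q, hqp, hlen, hq⟩ := p.exists_le_moves_length_eq (b := {N}) (by simpa using hN)
    exact ⟨q, fun _ => ⟨p.length, by omega, N, by simp [hq], hxN, hNU⟩, hqp⟩
  · exact ⟨p, fun h => absurd h hx, le_rfl⟩

theorem exists_run_of_posetFilter {F : Set α.PartialPlay} (hF : PosetFilter F)
    (hlen : ∀ n, ∃ p ∈ F, n < p.length) :
    ∃ b : ℕ → Finset (Set X), (∀ n, ↑(b n) ⊆ α n fun i => b i) ∧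
      ∀ p ∈ F, ∀ i < p.length, p.moves i = b i := by
  choose q hqF hq using hlen
  have hb : ∀ p ∈ F, ∀ i < p.length, p.moves i = (q i).moves i := by
    intro p hp i hi
    obtain ⟨r, -, hrp, hrq⟩ := hF.2.2 p hp (q i) (hqF i)
    exact (hrp.2 i hi).symm.trans (hrq.2 i (hq i))
  refine ⟨fun n => (q n).moves n, fun n => ?_, hb⟩
  have hprev : (fun i : Fin n => (q i).moves i) = fun i : Fin n => (q n).moves i :=
    funext fun i => (hb _ (hqF n) i (i.2.trans (hq n))).symm
  rw [hprev]
  exact subset_of_mem_plays (q n).mem_plays (hq n)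

end PartialPlay

end MAliceStrategy

theorem not_mAliceWinning_of_mk_lt (hMA : MartinsAxiomBelow domNumber) {X : Type u}
    [TopologicalSpace X] {B : Set (Set X)} (hB : IsTopologicalBasis B)
    (hBmk : #B < lift.{u} domNumber) (hX : #X < lift.{u} domNumber) (α : MAliceStrategy X) :
    ¬ MAliceWinning α := by
  rintro ⟨hα, hlose⟩
  have := α.countable_partialPlay fun n h => (hα n h).1
  let D : ULift.{u} ℕ ⊕ X × B → Set α.PartialPlay := Sum.elim
    (fun n => {p | n.down < p.length})
    fun xV => {p | xV.1 ∈ (xV.2 : Set X) →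
      ∃ i < p.length, ∃ N ∈ p.moves i, xV.1 ∈ N ∧ N ⊆ xV.2}
  have hD : ∀ i, PosetDense (D i) := by
    rintro (⟨n⟩ | ⟨x, V, hV⟩)
    · exact MAliceStrategy.PartialPlay.posetDense_lt_length n.down
    · exact MAliceStrategy.PartialPlay.posetDense_covers (fun n h => (hα n h).2) x
        (hB.isOpen hV)
  have hω : ℵ₀ ≤ lift.{u} domNumber := aleph0_le_lift.2 aleph0_lt_domNumber.le
  have hmk : #(ULift.{u} ℕ ⊕ X × B) < lift.{u} domNumber := by
    simp only [mk_sum, mk_prod, mk_uLift, mk_nat, lift_aleph0, lift_id]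
    exact add_lt_of_lt hω (aleph0_lt_lift.2 aleph0_lt_domNumber) (mul_lt_of_lt hω hX hBmk)
  obtain ⟨F, hF, hFD⟩ := hMA.exists_posetFilter_of_countable D hD hmk
  obtain ⟨b, hb, hFb⟩ := MAliceStrategy.PartialPlay.exists_run_of_posetFilter hF
    fun n => hFD (.inl ⟨n⟩)
  refine hlose b hb fun x U hU hxU => ?_
  obtain ⟨V, hVB, hxV, hVU⟩ := hB.exists_subset_of_mem_open hxU hU
  obtain ⟨p, hpF, hp⟩ := hFD (.inr (x, ⟨V, hVB⟩))
  obtain ⟨i, hi, N, hN, hxN, hNV⟩ := hp hxV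
  exact ⟨N, mem_iUnion.2 ⟨i, by rw [← hFb p hpF i hi]; exact hN⟩, hxN, hNV.trans hVU⟩

theorem not_mAliceWins_of_mk_lt (hMA : MartinsAxiomBelow domNumber) {X : Type u}
    [TopologicalSpace X] (hw : topWeight X < lift.{u} domNumber)
    (hX : #X < lift.{u} domNumber) : ¬ MAliceWins X := by
  obtain ⟨B, hB, hBmk⟩ := exists_isTopologicalBasis_mk_eq_topWeight X
  rintro ⟨α, hα⟩
  exact not_mAliceWinning_of_mk_lt hMA hB (hBmk ▸ hw) hX α hα

theorem stmt11_general (hMA : MartinsAxiomBelow domNumber)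
    {X : Type u} [TopologicalSpace X]
    (hnw : (CtblNetwork X).Nonempty)
    (hw : topWeight X < Cardinal.lift.{u} domNumber) :
    (Cardinal.mk X < Cardinal.lift.{u} domNumber ↔ ¬ MAliceWins X) ∧
    (¬ MAliceWins X ↔ MNwSelective X) := by
  have h12 : #X < lift.{u} domNumber → ¬ MAliceWins X := not_mAliceWins_of_mk_lt hMA hw
  have h23 : ¬ MAliceWins X → MNwSelective X := mNwSelective_of_not_mAliceWins
  have h31 : MNwSelective X → #X < lift.{u} domNumber := fun h =>
    mk_lt_lift_domNumber_of_forall_exists_le (h.exists_forall_exists_le hnw)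
  exact ⟨⟨h12, h31 ∘ h23⟩, ⟨h23, h12 ∘ h31⟩⟩

theorem stmt11 (hMA : MartinsAxiomBelow domNumber)
    {X : Type u} [TopologicalSpace X] [T2Space X]
    (hnw : (CtblNetwork X).Nonempty)
    (hw : topWeight X < Cardinal.lift.{u} domNumber) :
    (Cardinal.mk X < Cardinal.lift.{u} domNumber ↔ ¬ MAliceWins X) ∧
    (¬ MAliceWins X ↔ MNwSelective X) :=
  stmt11_general hMA hnw hw
end

section
/- Assume MA[𝔡] and ω₁ < 𝔡. For any subset X of the irrational numbers of cardinality ω₁, the M-nw-selective game on X is indeterminate: neither player has a winning strategy. -/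
open Set Cardinal TopologicalSpace

open Topology

/-!
Alice cannot win: a strategy of hers has only countably many legal finite runs, which form a
(trivially ccc) poset. There are `#X · ℵ₀ < 𝔡` dense sets, one for each point `x` and basic
neighbourhood `V` of it, asking that Bob has picked some `N` with `x ∈ N ⊆ V`; a filter meeting
them all, given by `MA[𝔡]`, is an infinite legal run in which Bob's picks form a network.

Bob cannot win: for `z ∉ X` Alice may play the network of basic sets whose closure misses `z`.
Against such plays, the points caught at a position `p` (in the closure of Bob's answer whatever
`z` Alice aims at next) form a closed set inside `X`. Bob's answers range over a countable set, so
countably many positions suffice, and a winning Bob must catch every point of `X` at one of them.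
So `X` is a countable union of closed subsets of `ℝ`, each of size `< 𝔡 ≤ 𝔠`, hence countable
(an uncountable closed set contains a Cantor set): this contradicts `#X = ℵ₁`.
-/

theorem countable_setOf_finset_subset {β : Type*} {s : Set β} (hs : s.Countable) :
    {F : Finset β | ↑F ⊆ s}.Countable := by
  refine ((countable_ofPred_finite_subset hs).preimage Finset.coe_injective).mono fun F hF => ?_
  exact ⟨F.finite_toSet, hF⟩

theorem Fin.snoc_restrict {Y : Type*} (z : ℕ → Y) (n : ℕ) :
    (Fin.snoc (fun i : Fin n => z i) (z n) : Fin (n + 1) → Y) = fun i : Fin (n + 1) => z i :=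
  Fin.snoc_init_self (fun i : Fin (n + 1) => z i)

theorem exists_seq_of_forall_exists_snoc {Y : Type*} (S : ∀ n, Set (Fin n → Y))
    (Q : ∀ n, (Fin n → Y) → Y → Prop) (h0 : Fin.elim0 ∈ S 0)
    (h : ∀ n, ∀ p ∈ S n, ∃ y, Fin.snoc p y ∈ S (n + 1) ∧ Q n p y) :
    ∃ z : ℕ → Y, ∀ n, (fun i : Fin n => z i) ∈ S n ∧ Q n (fun i : Fin n => z i) (z n) := by
  choose next hnext using h
  let P : ∀ n, S n := fun n => Nat.rec (motive := fun n => S n) ⟨Fin.elim0, h0⟩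
    (fun n p => ⟨Fin.snoc p.1 (next n p.1 p.2), (hnext n p.1 p.2).1⟩) n
  let z n := next n (P n).1 (P n).2
  have hP : ∀ n, (P n).1 = fun i : Fin n => z i := by
    intro n
    induction n with
    | zero => funext i; exact i.elim0
    | succ n ih =>
      change (Fin.snoc (P n).1 (z n) : Fin (n + 1) → Y) = _
      rw [ih, Fin.snoc_restrict]
  refine ⟨z, fun n => ?_⟩
  rw [← hP n]
  exact ⟨(P n).2, (hnext n _ (P n).2).2⟩

theorem domNumber_le_continuum : domNumber ≤ 𝔠 := by
  refine csInf_le' ⟨univ, fun g => ⟨g, mem_univ g, Filter.Eventually.of_forall fun _ => le_rfl⟩, ?_⟩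
  simp

theorem continuum_le_mk_of_isClosed_of_not_countable {Y : Type*} [TopologicalSpace Y]
    [PolishSpace Y] {C : Set Y} (hC : IsClosed C) (hunc : ¬ C.Countable) : 𝔠 ≤ #C := by
  obtain ⟨f, hfC, -, hf⟩ := hC.exists_nat_bool_injection_of_not_countable hunc
  have := Cardinal.lift_mk_le_lift_mk_of_injective (β := C) (f := fun x => ⟨f x, hfC ⟨x, rfl⟩⟩)
    fun x y hxy => hf (congrArg Subtype.val hxy)
  simpa using this

theorem Set.Countable.sUnion_of_isClosed_of_mk_lt_continuum {Y : Type*} [TopologicalSpace Y]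
    [PolishSpace Y] {𝒞 : Set (Set Y)} (h𝒞 : 𝒞.Countable) (hclosed : ∀ C ∈ 𝒞, IsClosed C)
    (hlt : #(⋃₀ 𝒞) < 𝔠) : (⋃₀ 𝒞).Countable :=
  h𝒞.sUnion fun C hC => by
    by_contra hunc
    exact (continuum_le_mk_of_isClosed_of_not_countable (hclosed C hC) hunc).not_gt
      (lt_of_le_of_lt (mk_le_mk_of_subset (subset_sUnion_of_mem hC)) hlt)

namespace MAliceStrategy

variable {X : Type*} [TopologicalSpace X] (α : MAliceStrategy X)

def IsLegalPlay (l : List (Finset (Set X))) : Prop :=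
  ∀ n < l.length, ↑(l.getD n ∅) ⊆ α n fun i : Fin n => l.getD i ∅

def LegalPlay : Type _ := {l : List (Finset (Set X)) // α.IsLegalPlay l}

-- Longer runs are stronger conditions.
instance : Preorder α.LegalPlay where
  le p q := q.1 <+: p.1
  le_refl p := List.prefix_rfl
  le_trans _ _ _ hpq hqr := hqr.trans hpq

variable {α}

theorem isLegalPlay_nil : α.IsLegalPlay [] := fun n hn => absurd hn (Nat.not_lt_zero n)

theorem isLegalPlay_append_singleton_iff {l : List (Finset (Set X))} {F : Finset (Set X)} :
    α.IsLegalPlay (l ++ [F]) ↔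
      α.IsLegalPlay l ∧ ↑F ⊆ α l.length fun i : Fin l.length => l.getD i ∅ := by
  have hprefix : ∀ m ≤ l.length,
      (fun i : Fin m => (l ++ [F]).getD i ∅) = fun i : Fin m => l.getD i ∅ :=
    fun m hm => funext fun i => List.getD_append _ _ _ _ (i.2.trans_le hm)
  have hlast : (l ++ [F]).getD l.length ∅ = F := by simp
  constructor
  · intro h
    refine ⟨fun n hn => ?_, ?_⟩
    · have := h n (by simp; omega)
      rwa [List.getD_append _ _ _ _ hn, hprefix n hn.le] at this
    · have := h l.length (by simp)
      rwa [hlast, hprefix _ le_rfl] at this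
  · rintro ⟨hl, hF⟩ n hn
    rcases (Nat.lt_succ_iff.1 (by simpa using hn)).lt_or_eq with hn | rfl
    · rw [List.getD_append _ _ _ _ hn, hprefix n hn.le]
      exact hl n hn
    · rwa [hlast, hprefix _ le_rfl]

theorem countable_setOf_isLegalPlay (hα : ∀ n h, (α n h).Countable) :
    {l | α.IsLegalPlay l}.Countable := by
  have hlength : ∀ n, {l | α.IsLegalPlay l ∧ l.length = n}.Countable := by
    intro n
    induction n with
    | zero => exact (countable_singleton []).mono fun l hl => List.length_eq_zero_iff.1 hl.2
    | succ n ih =>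
      refine (ih.biUnion fun l _ => (countable_setOf_finset_subset
        (hα l.length fun i => l.getD i ∅)).image (fun F => l ++ [F])).mono ?_
      rintro l ⟨hl, hlen⟩
      obtain ⟨l', F, rfl⟩ := List.eq_nil_or_concat' l |>.resolve_left (by rintro rfl; simp at hlen)
      rw [isLegalPlay_append_singleton_iff] at hl
      exact mem_biUnion (show l' ∈ {l | α.IsLegalPlay l ∧ l.length = n} from
        ⟨hl.1, by simpa using hlen⟩) ⟨F, hl.2, rfl⟩
  refine (countable_iUnion hlength).mono fun l hl => mem_iUnion_of_mem l.length ?_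
  exact ⟨hl, rfl⟩

theorem countable_legalPlay (hα : ∀ n h, (α n h).Countable) : Countable α.LegalPlay :=
  (countable_setOf_isLegalPlay hα).to_subtype

variable {G : Set α.LegalPlay}

theorem prefix_or_prefix_of_directedOn (hG : DirectedOn (· ≥ ·) G) {p q : α.LegalPlay}
    (hp : p ∈ G) (hq : q ∈ G) : p.1 <+: q.1 ∨ q.1 <+: p.1 := by
  obtain ⟨r, -, hpr, hqr⟩ := hG p hp q hq
  exact (le_total p.1.length q.1.length).imp (List.prefix_of_prefix_length_le hpr hqr)
    (List.prefix_of_prefix_length_le hqr hpr)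

theorem getD_eq_of_directedOn (hG : DirectedOn (· ≥ ·) G) {p q : α.LegalPlay} (hp : p ∈ G)
    (hq : q ∈ G) {n : ℕ} (hnp : n < p.1.length) (hnq : n < q.1.length) :
    p.1.getD n ∅ = q.1.getD n ∅ := by
  rcases prefix_or_prefix_of_directedOn hG hp hq with ⟨t, ht⟩ | ⟨t, ht⟩
  · rw [← ht, List.getD_append _ _ _ _ hnp]
  · rw [← ht, List.getD_append _ _ _ _ hnq]

theorem exists_limit_of_directedOn (hG : DirectedOn (· ≥ ·) G) :
    ∃ b : ℕ → Finset (Set X), (∀ n, ↑(b n) ⊆ α n fun i : Fin n => b i) ∧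
      ∀ p ∈ G, ∀ n < p.1.length, p.1.getD n ∅ = b n := by
  classical
  let b : ℕ → Finset (Set X) := fun n =>
    if h : ∃ p ∈ G, n < p.1.length then h.choose.1.getD n ∅ else ∅
  have hGb : ∀ p ∈ G, ∀ n < p.1.length, p.1.getD n ∅ = b n := by
    intro p hp n hn
    have h : ∃ p ∈ G, n < p.1.length := ⟨p, hp, hn⟩
    simp only [b, dif_pos h]
    exact getD_eq_of_directedOn hG hp h.choose_spec.1 hn h.choose_spec.2
  refine ⟨b, fun n => ?_, hGb⟩
  by_cases h : ∃ p ∈ G, n < p.1.length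
  · obtain ⟨p, hp, hn⟩ := h
    have hrestrict : (fun i : Fin n => b i) = fun i : Fin n => p.1.getD i ∅ :=
      funext fun i => (hGb p hp i (i.2.trans hn)).symm
    rw [hrestrict, ← hGb p hp n hn]
    exact p.2 n hn
  · simp only [b, dif_neg h, Finset.coe_empty, empty_subset]

theorem posetDense_setOf_exists_getD (hα : ∀ n h, IsNetwork (α n h)) {x : X} {V : Set X}
    (hV : IsOpen V) :
    PosetDense
      {p : α.LegalPlay | x ∈ V → ∃ m < p.1.length, ∃ N ∈ p.1.getD m ∅, x ∈ N ∧ N ⊆ V} := by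
  intro p
  by_cases hx : x ∈ V
  · obtain ⟨N, hN, hxN, hNV⟩ := hα _ (fun i : Fin p.1.length => p.1.getD i ∅) x V hV hx
    refine ⟨⟨p.1 ++ [{N}], isLegalPlay_append_singleton_iff.2 ⟨p.2, by simpa using hN⟩⟩,
      fun _ => ⟨p.1.length, by simp, N, by simp, hxN, hNV⟩, [{N}], rfl⟩
  · exact ⟨p, fun h => absurd h hx, le_rfl⟩

end MAliceStrategy

theorem not_mAliceWins_of_martinsAxiomBelow {X : Type} [TopologicalSpace X]
    [SecondCountableTopology X] {c : Cardinal} (hMA : MartinsAxiomBelow c) (hc : ℵ₀ < c)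
    (hX : #X < c) : ¬ MAliceWins X := by
  rintro ⟨α, hαnet, hαwin⟩
  have := α.countable_legalPlay fun n h => (hαnet n h).1
  let D : X × countableBasis X → Set α.LegalPlay := fun t =>
    {p | t.1 ∈ (t.2 : Set X) → ∃ m < p.1.length, ∃ N ∈ p.1.getD m ∅, t.1 ∈ N ∧ N ⊆ t.2}
  have hD : ∀ E ∈ range D, PosetDense E := forall_mem_range.2 fun t =>
    MAliceStrategy.posetDense_setOf_exists_getD (fun n h => (hαnet n h).2)
      (isOpen_of_mem_countableBasis t.2.2)
  have hcard : #(range D) < c := by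
    refine mk_range_le.trans_lt ?_
    rw [mk_prod, lift_id, lift_id]
    exact mul_lt_of_lt hc.le hX
      ((mk_le_aleph0_iff.2 (countable_countableBasis X).to_subtype).trans_lt hc)
  obtain ⟨G, hG, hGD⟩ := hMA α.LegalPlay ⟨⟨[], MAliceStrategy.isLegalPlay_nil⟩⟩
    (fun A _ => A.to_countable) (range D) hD hcard
  obtain ⟨b, hb, hGb⟩ := MAliceStrategy.exists_limit_of_directedOn hG.2.2
  refine hαwin b hb fun x U hU hxU => ?_
  obtain ⟨V, hV, hxV, hVU⟩ := (isBasis_countableBasis X).exists_subset_of_mem_open hxU hU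
  obtain ⟨p, hpG, hpD⟩ := hGD _ ⟨(x, ⟨V, hV⟩), rfl⟩
  obtain ⟨m, hm, N, hN, hxN, hNV⟩ := hpD hxV
  exact ⟨N, mem_iUnion.2 ⟨m, hGb p hpG m hm ▸ hN⟩, hxN, hNV.trans hVU⟩

section BobStrategy

variable {Y : Type*} [TopologicalSpace Y] (X : Set Y)

def ambientClosure (F : Finset (Set X)) : Set Y :=
  closure (⋃ N ∈ F, (↑) '' N)

-- Alice's move aimed at a point `z ∉ X`.
def avoidingNetwork [SecondCountableTopology Y] (z : Y) : Set (Set X) :=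
  (fun V => ((↑) : X → Y) ⁻¹' V) '' {V ∈ countableBasis Y | z ∉ closure V}

variable {X}

theorem coe_mem_ambientClosure {F : Finset (Set X)} {N : Set X} (hN : N ∈ F) {x : X}
    (hx : x ∈ N) : (x : Y) ∈ ambientClosure X F :=
  subset_closure (mem_biUnion hN (mem_image_of_mem _ hx))

variable [SecondCountableTopology Y]

theorem avoidingNetwork_mem_ctblNetwork [T3Space Y] {z : Y} (hz : z ∉ X) :
    avoidingNetwork X z ∈ CtblNetwork X := by
  refine ⟨((countable_countableBasis Y).mono (sep_subset _ _)).image _, fun x U hU hxU => ?_⟩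
  obtain ⟨W, hW, rfl⟩ := isOpen_induced_iff.mp hU
  have hWz : W \ {z} ∈ 𝓝 (x : Y) :=
    (hW.sdiff isClosed_singleton).mem_nhds ⟨hxU, fun h : (x : Y) = z => hz (h ▸ x.2)⟩
  obtain ⟨V, hVB, hxV, hVW⟩ := (isBasis_countableBasis Y).exists_closure_subset hWz
  exact ⟨_, ⟨V, ⟨hVB, fun h => (hVW h).2 rfl⟩, rfl⟩, hxV,
    fun y hy => (hVW (subset_closure hy)).1⟩

theorem notMem_ambientClosure {z : Y} {F : Finset (Set X)} (hF : ↑F ⊆ avoidingNetwork X z) :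
    z ∉ ambientClosure X F := by
  rw [ambientClosure, Finset.closure_biUnion]
  simp only [mem_iUnion, not_exists]
  intro N hN hzN
  obtain ⟨V, ⟨-, hzV⟩, rfl⟩ := hF hN
  exact hzV (closure_mono (image_preimage_subset _ _) hzN)

end BobStrategy

theorem MBobWinning.subset_last {X : Type*} [TopologicalSpace X] {σ : MBobStrategy X}
    (hσ : MBobWinning σ) {n : ℕ} (A : Fin (n + 1) → Set (Set X))
    (hA : ∀ i, A i ∈ CtblNetwork X) : ↑(σ n A) ⊆ A (Fin.last n) := by
  let A' : ℕ → Set (Set X) := fun i => if h : i < n + 1 then A ⟨i, h⟩ else A (Fin.last n)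
  have hA' : ∀ i, A' i ∈ CtblNetwork X := fun i => by
    by_cases h : i < n + 1 <;> simp only [A', h, dite_true, dite_false, hA]
  have hrestrict : (fun i : Fin (n + 1) => A' i) = A := funext fun i => dif_pos i.2
  have := (hσ A' hA').1 n
  rwa [hrestrict, show A' n = A (Fin.last n) from dif_pos n.lt_succ_self] at this

namespace MBobStrategy

variable {Y : Type*} [TopologicalSpace Y] [SecondCountableTopology Y] {X : Set Y}
  (σ : MBobStrategy X)

def answer {n : ℕ} (p : Fin n → Y) (z : Y) : Finset (Set X) :=
  σ n fun i => avoidingNetwork X (Fin.snoc (α := fun _ => Y) p z i)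

def caughtSet {n : ℕ} (p : Fin n → Y) : Set Y :=
  ⋂ z ∈ Xᶜ, ambientClosure X (σ.answer p z)

def representatives {n : ℕ} (p : Fin n → Y) : Set Y :=
  (exists_subset_bijOn Xᶜ (σ.answer p)).choose

def positions : ∀ n, Set (Fin n → Y)
  | 0 => univ
  | n + 1 => ⋃ p ∈ positions n,
      (fun z => Fin.snoc p z : Y → Fin (n + 1) → Y) '' σ.representatives p

variable {σ}

theorem isClosed_caughtSet {n : ℕ} (p : Fin n → Y) : IsClosed (σ.caughtSet p) :=
  isClosed_biInter fun _ _ => isClosed_closure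

theorem representatives_subset {n : ℕ} (p : Fin n → Y) : σ.representatives p ⊆ Xᶜ :=
  (exists_subset_bijOn Xᶜ (σ.answer p)).choose_spec.1

theorem image_representatives {n : ℕ} (p : Fin n → Y) :
    σ.answer p '' σ.representatives p = σ.answer p '' Xᶜ :=
  (exists_subset_bijOn Xᶜ (σ.answer p)).choose_spec.2.image_eq

theorem positions_notMem : ∀ {n : ℕ}, ∀ p ∈ σ.positions n, ∀ i, p i ∉ X
  | 0, _, _, i => i.elim0
  | n + 1, _, hp, i => by
    obtain ⟨q, hq, z, hz, rfl⟩ := by simpa only [positions, mem_iUnion, mem_image] using hp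
    induction i using Fin.lastCases with
    | last => simpa using representatives_subset q hz
    | cast j => simpa using positions_notMem q hq j

variable [T3Space Y]

theorem answer_subset (hσ : MBobWinning σ) {n : ℕ} {p : Fin n → Y} (hp : ∀ i, p i ∉ X) {z : Y}
    (hz : z ∉ X) : ↑(σ.answer p z) ⊆ avoidingNetwork X z := by
  have hsnoc : ∀ i, Fin.snoc (α := fun _ => Y) p z i ∉ X := Fin.lastCases (by simpa using hz)
    fun i => by simpa using hp i
  have := hσ.subset_last _ fun i => avoidingNetwork_mem_ctblNetwork (hsnoc i)
  rwa [Fin.snoc_last] at this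

theorem caughtSet_subset (hσ : MBobWinning σ) {n : ℕ} {p : Fin n → Y} (hp : ∀ i, p i ∉ X) :
    σ.caughtSet p ⊆ X := fun w hw => by
  by_contra hwX
  exact notMem_ambientClosure (answer_subset hσ hp hwX) (mem_iInter₂.1 hw w hwX)

theorem countable_representatives (hσ : MBobWinning σ) {n : ℕ} {p : Fin n → Y}
    (hp : ∀ i, p i ∉ X) : (σ.representatives p).Countable := by
  have hbasic : ((fun V => ((↑) : X → Y) ⁻¹' V) '' countableBasis Y).Countable :=
    (countable_countableBasis Y).image _
  have hanswers : (σ.answer p '' Xᶜ).Countable := by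
    refine (countable_setOf_finset_subset hbasic).mono ?_
    rintro _ ⟨z, hz, rfl⟩
    exact (answer_subset hσ hp hz).trans (image_mono (sep_subset _ _))
  exact (exists_subset_bijOn Xᶜ (σ.answer p)).choose_spec.2.mapsTo.countable_of_injOn
    (exists_subset_bijOn Xᶜ (σ.answer p)).choose_spec.2.injOn hanswers

theorem countable_positions (hσ : MBobWinning σ) : ∀ n, (σ.positions n).Countable
  | 0 => subsingleton_univ.countable
  | n + 1 => (countable_positions hσ n).biUnion fun p hp =>
      (countable_representatives hσ (positions_notMem p hp)).image _

theorem exists_mem_positions_mem_caughtSet (hσ : MBobWinning σ) (x : X) :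
    ∃ n, ∃ p ∈ σ.positions n, (x : Y) ∈ σ.caughtSet p := by
  by_contra! hx
  have hstep : ∀ n, ∀ p ∈ σ.positions n, ∃ y, Fin.snoc p y ∈ σ.positions (n + 1) ∧
      (x : Y) ∉ ambientClosure X (σ.answer p y) := by
    intro n p hp
    obtain ⟨z, hz, hxz⟩ : ∃ z ∈ Xᶜ, (x : Y) ∉ ambientClosure X (σ.answer p z) := by
      simpa [caughtSet] using hx n p hp
    obtain ⟨y, hy, hyz⟩ := (image_representatives p).symm ▸ mem_image_of_mem (σ.answer p) hz
    exact ⟨y, mem_biUnion hp (mem_image_of_mem _ hy), hyz ▸ hxz⟩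
  obtain ⟨z, hz⟩ := exists_seq_of_forall_exists_snoc σ.positions
    (fun _ p y => (x : Y) ∉ ambientClosure X (σ.answer p y)) (mem_univ _) hstep
  -- Alice aims at `z 0, z 1, …`; Bob's answers then never catch `x`.
  let A : ℕ → Set (Set X) := fun n => avoidingNetwork X (z n)
  have hA : ∀ n, A n ∈ CtblNetwork X := fun n =>
    avoidingNetwork_mem_ctblNetwork (positions_notMem _ (hz (n + 1)).1 (Fin.last n))
  have hanswer : ∀ n, σ n (fun i : Fin (n + 1) => A i) = σ.answer (fun i : Fin n => z i) (z n) :=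
    fun n => by simp only [answer, Fin.snoc_restrict, A]
  obtain ⟨N, hN, hxN, -⟩ := (hσ A hA).2 x univ isOpen_univ trivial
  obtain ⟨n, hn⟩ := mem_iUnion.1 hN
  rw [hanswer] at hn
  exact (hz n).2 (coe_mem_ambientClosure hn hxN)

end MBobStrategy

theorem MBobWins.exists_countable_isClosed_sUnion_eq {Y : Type*} [TopologicalSpace Y]
    [SecondCountableTopology Y] [T3Space Y] {X : Set Y} (h : MBobWins X) :
    ∃ 𝒞 : Set (Set Y), 𝒞.Countable ∧ (∀ C ∈ 𝒞, IsClosed C) ∧ ⋃₀ 𝒞 = X := by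
  obtain ⟨σ, hσ⟩ := h
  refine ⟨⋃ n, σ.caughtSet '' σ.positions n,
    countable_iUnion fun n => (σ.countable_positions hσ n).image _, ?_, ?_⟩
  · simp only [mem_iUnion, mem_image]
    rintro _ ⟨n, p, -, rfl⟩
    exact σ.isClosed_caughtSet p
  · refine Subset.antisymm (sUnion_subset ?_) fun x hx => ?_
    · simp only [mem_iUnion, mem_image]
      rintro _ ⟨n, p, hp, rfl⟩
      exact σ.caughtSet_subset hσ (σ.positions_notMem p hp)
    · obtain ⟨n, p, hp, hxp⟩ := σ.exists_mem_positions_mem_caughtSet hσ ⟨x, hx⟩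
      exact mem_sUnion.2 ⟨_, mem_iUnion.2 ⟨n, mem_image_of_mem _ hp⟩, hxp⟩

theorem stmt16_general (hMA : MartinsAxiomBelow domNumber)
    (hd : Cardinal.aleph 1 < domNumber) (X : Set ℝ)
    (hX : Cardinal.mk X = Cardinal.aleph 1) :
    ¬ MAliceWins X ∧ ¬ MBobWins X := by
  have hXd : #X < domNumber := hX ▸ hd
  refine ⟨not_mAliceWins_of_martinsAxiomBelow hMA (aleph0_lt_aleph_one.trans hd) hXd,
    fun hBob => ?_⟩
  obtain ⟨𝒞, h𝒞, hclosed, rfl⟩ := hBob.exists_countable_isClosed_sUnion_eq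
  have hcount := h𝒞.sUnion_of_isClosed_of_mk_lt_continuum hclosed
    (hXd.trans_le domNumber_le_continuum)
  exact (hX ▸ mk_le_aleph0_iff.2 hcount.to_subtype).not_gt aleph0_lt_aleph_one

theorem stmt16 (hMA : MartinsAxiomBelow domNumber)
    (hd : Cardinal.aleph 1 < domNumber) (X : Set ℝ)
    (hirr : ∀ x ∈ X, Irrational x) (hX : Cardinal.mk X = Cardinal.aleph 1) :
    ¬ MAliceWins X ∧ ¬ MBobWins X :=
  stmt16_general hMA hd X hX
end
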